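/- arXiv:1912.13175 — 2 statements merged into one kernel-verified Lean document; each statement's English description precedes it below -/
import Mathlib

section
/- Let (V,d) be a finite metric space with distinct pairwise distances and diameter Δ = max_{v,w} d(v,w). Let L_NUV be the total length of the NUV walk from any starting point v_0, and let N(r) be the minimal size of an r-covering set. Then L_NUV ≤ 2 ∫_0^{Δ/2} N(r) dr. -/
/-- The length `D(v_i)` of the step taken from the `i`-th visited point. -/
noncomputable def stepLen {V : Type*} [MetricSpace V] {n : ℕ} (e : Fin n → V) (i : Fin n) : ℝ :=
  if h : i.val + 1 < n then dist (e i) (e ⟨i.val + 1, h⟩) else 0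

/-- Total length of the walk `e`. -/
noncomputable def walkLen {V : Type*} [MetricSpace V] {n : ℕ} (e : Fin n → V) : ℝ :=
  ∑ i : Fin n, stepLen e i

/-- `e` is a nearest-unvisited-vertex (greedy) order. -/
def IsNUV {V : Type*} [MetricSpace V] {n : ℕ} (e : Fin n → V) : Prop :=
  ∀ i j : Fin n, i < j → stepLen e i ≤ dist (e i) (e j)

/-- All pairwise distances between distinct points are distinct. -/
def DistinctDistances (V : Type*) [MetricSpace V] : Prop :=
  ∀ a b c d : V, a ≠ b → c ≠ d → dist a b = dist c d → (a = c ∧ b = d) ∨ (a = d ∧ b = c)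

/-- `N(r)`: minimal cardinality of a set of centers whose radius-`r` balls cover `V`. -/
noncomputable def coverNum (V : Type*) [MetricSpace V] (r : ℝ) : ℕ :=
  sInf {k : ℕ | ∃ S : Finset V, S.card = k ∧ ∀ v : V, ∃ s ∈ S, dist v s ≤ r}

/-! By the layer-cake formula the walk length is `∫₀^Δ #{i | D(vᵢ) > r} dr`. The starting points
of steps longer than `r` are pairwise more than `r` apart, so each ball of an `r/2`-cover contains
at most one of them and the integrand is at most `N(r/2)`; substituting `r = 2t` finishes. -/

open MeasureTheory
open scoped Finset

theorem intervalIntegral_ite_lt_one {x a : ℝ} (hx : 0 ≤ x) (hxa : x ≤ a) :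
    ∫ r in (0:ℝ)..a, (if r < x then (1:ℝ) else 0) = x := by
  have hind : (fun r : ℝ => if r < x then (1:ℝ) else 0) = (Set.Iio x).indicator 1 := by
    ext r; simp [Set.indicator]
  have hset : Set.Iio x ∩ Set.Ioc 0 a = Set.Ioo 0 x := by
    ext r
    simp only [Set.mem_inter_iff, Set.mem_Iio, Set.mem_Ioc, Set.mem_Ioo]
    constructor
    · rintro ⟨hrx, hr0, -⟩; exact ⟨hr0, hrx⟩
    · rintro ⟨hr0, hrx⟩; exact ⟨hrx, hr0, by linarith⟩
  rw [intervalIntegral.integral_of_le (hx.trans hxa), hind, integral_indicator_one measurableSet_Iio,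
    measureReal_restrict_apply measurableSet_Iio, hset, Real.volume_real_Ioo_of_le hx, sub_zero]

theorem Finset.sum_eq_intervalIntegral_card_lt {ι : Type*} (s : Finset ι) {f : ι → ℝ} {a : ℝ}
    (hf0 : ∀ i ∈ s, 0 ≤ f i) (hfa : ∀ i ∈ s, f i ≤ a) :
    ∑ i ∈ s, f i = ∫ r in (0:ℝ)..a, (#{i ∈ s | r < f i} : ℝ) := by
  have hint : ∀ i ∈ s, IntervalIntegrable (fun r : ℝ => if r < f i then (1:ℝ) else 0) volume 0 a :=
    fun i _ => Antitone.intervalIntegrable fun r r' hrr' => by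
      by_cases h' : r' < f i
      · simp [h', hrr'.trans_lt h']
      · by_cases h : r < f i <;> simp [h, h']
  simp_rw [Finset.natCast_card_filter, intervalIntegral.integral_finsetSum hint]
  exact Finset.sum_congr rfl fun i hi => (intervalIntegral_ite_lt_one (hf0 i hi) (hfa i hi)).symm

section coverNum

variable (V : Type*) [MetricSpace V] [Fintype V]

theorem exists_card_eq_coverNum {r : ℝ} (hr : 0 ≤ r) :
    ∃ S : Finset V, S.card = coverNum V r ∧ ∀ v : V, ∃ s ∈ S, dist v s ≤ r := by
  have hne : {k : ℕ | ∃ S : Finset V, S.card = k ∧ ∀ v : V, ∃ s ∈ S, dist v s ≤ r}.Nonempty :=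
    ⟨_, Finset.univ, rfl, fun v => ⟨v, Finset.mem_univ v, by rwa [dist_self]⟩⟩
  exact Nat.sInf_mem hne

theorem coverNum_antitoneOn : AntitoneOn (coverNum V) (Set.Ici 0) := by
  intro r hr r' _ hrr'
  obtain ⟨S, hS, hcover⟩ := exists_card_eq_coverNum V (r := r) hr
  exact hS ▸ Nat.sInf_le ⟨S, rfl, fun v => (hcover v).imp fun _ hs => ⟨hs.1, hs.2.trans hrr'⟩⟩

theorem card_le_coverNum_of_pairwise_lt_dist {ι : Type*} {s : Finset ι} {x : ι → V} {ρ : ℝ}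
    (hρ : 0 ≤ ρ) (hsep : ∀ i ∈ s, ∀ j ∈ s, i ≠ j → 2 * ρ < dist (x i) (x j)) :
    s.card ≤ coverNum V ρ := by
  obtain ⟨S, hS, hcover⟩ := exists_card_eq_coverNum V hρ
  choose c hcS hc using hcover
  rw [← hS]
  refine Finset.card_le_card_of_injOn (c ∘ x) (fun i _ => hcS (x i)) fun i hi j hj hij => ?_
  replace hij : c (x i) = c (x j) := hij
  by_contra hne
  have : dist (x i) (x j) ≤ 2 * ρ := calc
    dist (x i) (x j) ≤ dist (x i) (c (x i)) + dist (x j) (c (x j)) := by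
      simpa only [hij] using dist_triangle_right (x i) (x j) (c (x i))
    _ ≤ 2 * ρ := by linarith [hc (x i), hc (x j)]
  exact (hsep i hi j hj hne).not_ge this

end coverNum

section stepLen

variable {V : Type*} [MetricSpace V] {n : ℕ} {e : Fin n → V}

theorem stepLen_nonneg (i : Fin n) : 0 ≤ stepLen e i := by
  unfold stepLen
  split
  · exact dist_nonneg
  · exact le_rfl

theorem stepLen_le_diam [Finite V] (i : Fin n) : stepLen e i ≤ Metric.diam (Set.univ : Set V) := by
  unfold stepLen
  split
  · exact Metric.dist_le_diam_of_mem Set.finite_univ.isBounded (Set.mem_univ _) (Set.mem_univ _)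
  · exact Metric.diam_nonneg

/-- Points left by steps longer than `r` are more than `r` apart: the earlier one chose a step
no longer than the distance to the later one. -/
theorem IsNUV.lt_dist_of_lt_stepLen (hNUV : IsNUV e) {r : ℝ} {i j : Fin n} (hij : i ≠ j)
    (hi : r < stepLen e i) (hj : r < stepLen e j) : r < dist (e i) (e j) := by
  rcases hij.lt_or_gt with hlt | hgt
  · exact hi.trans_le (hNUV i j hlt)
  · exact dist_comm (e i) (e j) ▸ hj.trans_le (hNUV j i hgt)

theorem IsNUV.card_lt_stepLen_le_coverNum [Fintype V] (hNUV : IsNUV e) {r : ℝ} (hr : 0 ≤ r) :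
    (#{i | r < stepLen e i} : ℝ) ≤ coverNum V (r / 2) := by
  refine Nat.cast_le.mpr (card_le_coverNum_of_pairwise_lt_dist V (x := e) (by positivity) ?_)
  intro i hi j hj hij
  rw [mul_div_cancel₀ r two_ne_zero]
  exact hNUV.lt_dist_of_lt_stepLen hij (Finset.mem_filter.mp hi).2 (Finset.mem_filter.mp hj).2

end stepLen

theorem stmt3_general {V : Type*} [MetricSpace V] [Fintype V] {n : ℕ}
    (e : Fin n ≃ V) (hNUV : IsNUV (⇑e)) :
    walkLen (⇑e) ≤
      2 * ∫ r in (0:ℝ)..(Metric.diam (Set.univ : Set V) / 2), (coverNum V r : ℝ) := by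
  set Δ := Metric.diam (Set.univ : Set V)
  have hΔ : 0 ≤ Δ := Metric.diam_nonneg
  have hcount : IntervalIntegrable (fun r : ℝ => (#{i | r < stepLen e i} : ℝ)) volume 0 Δ :=
    Antitone.intervalIntegrable fun r r' hrr' => Nat.cast_le.mpr <|
      Finset.card_le_card fun i hi => by
        simp only [Finset.mem_filter] at hi ⊢
        exact ⟨hi.1, hrr'.trans_lt hi.2⟩
  have hcover : IntervalIntegrable (fun r : ℝ => (coverNum V (r / 2) : ℝ)) volume 0 Δ := by
    refine AntitoneOn.intervalIntegrable fun r hr r' hr' hrr' => Nat.cast_le.mpr ?_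
    rw [Set.uIcc_of_le hΔ] at hr hr'
    exact coverNum_antitoneOn V (div_nonneg hr.1 zero_le_two) (div_nonneg hr'.1 zero_le_two)
      (by linarith)
  calc walkLen (⇑e)
      = ∫ r in (0:ℝ)..Δ, (#{i | r < stepLen e i} : ℝ) :=
        Finset.sum_eq_intervalIntegral_card_lt _ (fun i _ => stepLen_nonneg i)
          (fun i _ => stepLen_le_diam i)
    _ ≤ ∫ r in (0:ℝ)..Δ, (coverNum V (r / 2) : ℝ) :=
        intervalIntegral.integral_mono_on hΔ hcount hcover
          fun r hr => hNUV.card_lt_stepLen_le_coverNum hr.1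
    _ = 2 * ∫ r in (0:ℝ)..(Δ / 2), (coverNum V r : ℝ) := by
        rw [intervalIntegral.integral_comp_div (fun r => (coverNum V r : ℝ)) two_ne_zero,
          zero_div, smul_eq_mul]

/-- Proposition 1(ii): `L_NUV ≤ 2 ∫_0^{Δ/2} N(r) dr`. -/
theorem stmt3 {V : Type*} [MetricSpace V] [Fintype V] {n : ℕ} (hcard : Fintype.card V = n)
    (hd : DistinctDistances V) (e : Fin n ≃ V) (hNUV : IsNUV (⇑e)) :
    walkLen (⇑e) ≤
      2 * ∫ r in (0:ℝ)..(Metric.diam (Set.univ : Set V) / 2), (coverNum V r : ℝ) :=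
  stmt3_general e hNUV
end

section
/- There is an absolute constant A (one may take A = 12) such that for every finite set V of n ≥ 1 points in the unit square [0,1]² with distinct pairwise Euclidean distances, and every starting point v_0 ∈ V, the length of the NUV walk satisfies L_NUV ≤ A·n^{1/2}. -/
open scoped Classical

/-- The unit square in the Euclidean plane. -/
def unitSquare : Set (EuclideanSpace ℝ (Fin 2)) :=
  {x | ∀ i, x i ∈ Set.Icc (0:ℝ) 1}

/-- Sum of `1/√(m+1)` is at most `2√n`. -/
lemma aux_sum_one_div_sqrt (n : ℕ) :
    ∑ m ∈ Finset.range n, 1 / Real.sqrt (m + 1) ≤ 2 * Real.sqrt n := by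
  induction n with
  | zero => simp
  | succ n ih =>
    rw [Finset.sum_range_succ]
    have hs : Real.sqrt n ≤ Real.sqrt (n + 1) := by
      apply Real.sqrt_le_sqrt; push_cast; linarith
    have hpos : (0:ℝ) < Real.sqrt ((n:ℝ) + 1) := Real.sqrt_pos.mpr (by positivity)
    have hb2 : Real.sqrt ((n:ℝ) + 1) ^ 2 = (n:ℝ) + 1 := Real.sq_sqrt (by positivity)
    have ha2 : Real.sqrt (n:ℝ) ^ 2 = (n:ℝ) := Real.sq_sqrt (by positivity)
    have h1 : 1 / Real.sqrt ((n:ℝ) + 1) ≤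
        2 * (Real.sqrt ((n:ℝ) + 1) - Real.sqrt (n:ℝ)) := by
      rw [div_le_iff₀ hpos]
      nlinarith [sq_nonneg (Real.sqrt ((n:ℝ) + 1) - Real.sqrt (n:ℝ))]
    have hcast : ((n + 1 : ℕ) : ℝ) = (n:ℝ) + 1 := by push_cast; ring
    rw [hcast]
    linarith

/-- Rearrangement-type bound: if for every `m` at most `m` elements of `s` have
`f`-value at most `m`, and `g` is antitone on positive naturals, then the sum of
`g ∘ f` is dominated by `g 1 + g 2 + ⋯`. -/
lemma aux_sum_le {ι : Type*} [DecidableEq ι] (g : ℕ → ℝ)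
    (hg : ∀ a b : ℕ, 1 ≤ a → a ≤ b → g b ≤ g a) :
    ∀ (N : ℕ) (s : Finset ι) (f : ι → ℕ),
      (∀ m, (s.filter (fun i => f i ≤ m)).card ≤ m) → s.card = N →
      ∑ i ∈ s, g (f i) ≤ ∑ m ∈ Finset.range N, g (m + 1) := by
  intro N
  induction N with
  | zero =>
    intro s f _ h0
    rw [Finset.card_eq_zero.mp h0]; simp
  | succ N ih =>
    intro s f hf hcard
    have hs : s.Nonempty := Finset.card_pos.mp (by omega)
    obtain ⟨i, hi, hmax⟩ := s.exists_max_image f hs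
    have hfi : s.card ≤ f i := by
      have h := hf (f i)
      have hall : s.filter (fun j => f j ≤ f i) = s :=
        Finset.filter_true_of_mem (fun j hj => hmax j hj)
      rwa [hall] at h
    have h1 : g (f i) ≤ g (N + 1) := by
      have : N + 1 ≤ f i := by omega
      exact hg (N + 1) (f i) (by omega) this
    have herase : (s.erase i).card = N := by
      rw [Finset.card_erase_of_mem hi]; omega
    have hf' : ∀ m, ((s.erase i).filter (fun j => f j ≤ m)).card ≤ m := fun m =>
      le_trans (Finset.card_le_card
        (Finset.filter_subset_filter _ (s.erase_subset i))) (hf m)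
    have ih' := ih (s.erase i) f hf' herase
    rw [← Finset.add_sum_erase s _ hi, Finset.sum_range_succ]
    linarith

/-- A set of points in the unit square with pairwise distances at least `r` has at
most `16 / r²` elements (for `0 < r ≤ 2`). -/
lemma aux_card_separated (r : ℝ) (hr : 0 < r) (hr2 : r ≤ 2)
    (S : Finset (EuclideanSpace ℝ (Fin 2))) (hS : ↑S ⊆ unitSquare)
    (hsep : ∀ x ∈ S, ∀ y ∈ S, x ≠ y → r ≤ dist x y) :
    (S.card : ℝ) ≤ 16 / r ^ 2 := by
  set K : ℕ := ⌊2 / r⌋.toNat + 1 with hK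
  set φ : EuclideanSpace ℝ (Fin 2) → ℕ × ℕ :=
    fun x => ((⌊2 * x 0 / r⌋).toNat, (⌊2 * x 1 / r⌋).toNat) with hφ
  have hmaps : ∀ x ∈ S, φ x ∈ Finset.range K ×ˢ Finset.range K := by
    intro x hx
    have hb : ∀ i : Fin 2, (⌊2 * x i / r⌋).toNat < K := by
      intro i
      have hxi : x i ≤ 1 := (hS hx i).2
      have h1 : 2 * x i / r ≤ 2 / r := by gcongr <;> linarith
      have h2 : ⌊2 * x i / r⌋ ≤ ⌊2 / r⌋ := Int.floor_le_floor h1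
      have h3 := Int.toNat_le_toNat h2
      omega
    simpa [hφ, Finset.mem_product, Finset.mem_range] using ⟨hb 0, hb 1⟩
  have hinj : Set.InjOn φ ↑S := by
    intro x hx y hy hxy
    by_contra hne
    have hdxy : r ≤ dist x y := hsep x (by exact_mod_cast hx) y (by exact_mod_cast hy) hne
    have hcl : ∀ i : Fin 2, |x i - y i| < r / 2 := by
      intro i
      have hx0 : (0:ℝ) ≤ x i := (hS (by exact_mod_cast hx) i).1
      have hy0 : (0:ℝ) ≤ y i := (hS (by exact_mod_cast hy) i).1
      have hfx : (0:ℤ) ≤ ⌊2 * x i / r⌋ := Int.floor_nonneg.mpr (by positivity)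
      have hfy : (0:ℤ) ≤ ⌊2 * y i / r⌋ := Int.floor_nonneg.mpr (by positivity)
      have hflj : ∀ j : Fin 2, (⌊2 * x j / r⌋).toNat = (⌊2 * y j / r⌋).toNat := by
        have h0 : (⌊2 * x 0 / r⌋).toNat = (⌊2 * y 0 / r⌋).toNat :=
          congrArg Prod.fst hxy
        have h1 : (⌊2 * x 1 / r⌋).toNat = (⌊2 * y 1 / r⌋).toNat :=
          congrArg Prod.snd hxy
        intro j
        fin_cases j
        · exact h0
        · exact h1
      have hfl : ⌊2 * x i / r⌋ = ⌊2 * y i / r⌋ := by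
        have := hflj i
        omega
      have habs := Int.abs_sub_lt_one_of_floor_eq_floor hfl
      have heq : 2 * x i / r - 2 * y i / r = 2 * (x i - y i) / r := by ring
      rw [heq, abs_div, abs_of_pos hr, abs_mul] at habs
      rw [div_lt_one hr] at habs
      simp only [abs_two] at habs
      linarith [abs_nonneg (x i - y i)]
    have hlt : dist x y < r := by
      rw [EuclideanSpace.dist_eq]
      have hsum : ∑ i : Fin 2, dist (x i) (y i) ^ 2 < r ^ 2 := by
        rw [Fin.sum_univ_two, Real.dist_eq, Real.dist_eq]
        have h0 := hcl 0
        have h1 := hcl 1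
        nlinarith [abs_nonneg (x 0 - y 0), abs_nonneg (x 1 - y 1)]
      calc Real.sqrt (∑ i : Fin 2, dist (x i) (y i) ^ 2)
          < Real.sqrt (r ^ 2) := by
            apply Real.sqrt_lt_sqrt (by positivity) hsum
        _ = r := Real.sqrt_sq hr.le
    linarith
  have hcard : S.card ≤ K * K := by
    have := Finset.card_le_card_of_injOn φ hmaps hinj
    simpa [Finset.card_product] using this
  have hKr : (K : ℝ) ≤ 4 / r := by
    have h1 : ((⌊2 / r⌋.toNat : ℤ) : ℝ) ≤ 2 / r := by
      rw [Int.toNat_of_nonneg (Int.floor_nonneg.mpr (by positivity))]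
      exact Int.floor_le _
    have h2 : (1:ℝ) ≤ 2 / r := (one_le_div hr).mpr hr2
    have : (K : ℝ) = (⌊2 / r⌋.toNat : ℝ) + 1 := by push_cast [hK]; ring
    rw [this]
    push_cast at h1
    have h4 : 4 / r = 2 / r + 2 / r := by ring
    linarith
  have hfinal : (S.card : ℝ) ≤ (K : ℝ) * (K : ℝ) := by exact_mod_cast hcard
  have hK0 : (0:ℝ) ≤ (K:ℝ) := by positivity
  calc (S.card : ℝ) ≤ (K : ℝ) * (K : ℝ) := hfinal
    _ ≤ (4 / r) * (4 / r) := by nlinarith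
    _ = 16 / r ^ 2 := by field_simp; ring

/-- Corollary 2: for `n` points in the unit square with distinct pairwise Euclidean
distances, the NUV walk (from any start) has length at most `12·√n`. -/
theorem stmt7 {n : ℕ} (hn : 1 ≤ n)
    (V : Finset (EuclideanSpace ℝ (Fin 2))) (hV : ↑V ⊆ unitSquare) (hVn : V.card = n)
    (hd : ∀ a b c d : EuclideanSpace ℝ (Fin 2), a ∈ V → b ∈ V → c ∈ V → d ∈ V →
      a ≠ b → c ≠ d → dist a b = dist c d → (a = c ∧ b = d) ∨ (a = d ∧ b = c))
    (e : Fin n ≃ {x // x ∈ V}) (hNUV : IsNUV (fun i => (e i : EuclideanSpace ℝ (Fin 2)))) :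
    walkLen (fun i => (e i : EuclideanSpace ℝ (Fin 2))) ≤ 12 * Real.sqrt n := by
  set p : Fin n → EuclideanSpace ℝ (Fin 2) := fun i => (e i : EuclideanSpace ℝ (Fin 2)) with hp
  set D : Fin n → ℝ := fun i => stepLen p i with hD
  have hpV : ∀ i, p i ∈ V := fun i => (e i).2
  have hpinj : Function.Injective p := fun a b h => e.injective (Subtype.ext h)
  have hDnonneg : ∀ i, 0 ≤ D i := by
    intro i
    simp only [hD, stepLen]
    split
    · exact dist_nonneg
    · exact le_refl 0
  have hDle : ∀ i, D i ≤ 2 := by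
    intro i
    simp only [hD, stepLen]
    split
    · next h =>
      rw [EuclideanSpace.dist_eq]
      have hsq : ∑ j : Fin 2, dist (p i j) (p ⟨i.val+1, h⟩ j) ^ 2 ≤ 4 := by
        rw [Fin.sum_univ_two]
        have hb : ∀ (a b : EuclideanSpace ℝ (Fin 2)), a ∈ V → b ∈ V → ∀ j : Fin 2,
            dist (a j) (b j) ^ 2 ≤ 1 := by
          intro a b ha hb j
          have h1 := hV ha j
          have h2 := hV hb j
          rw [Real.dist_eq, sq_abs]
          nlinarith [h1.1, h1.2, h2.1, h2.2]
        have h0 := hb _ _ (hpV i) (hpV ⟨i.val+1, h⟩) 0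
        have h1 := hb _ _ (hpV i) (hpV ⟨i.val+1, h⟩) 1
        linarith
      calc Real.sqrt (∑ j : Fin 2, dist (p i j) (p ⟨i.val+1, h⟩ j) ^ 2)
          ≤ Real.sqrt 4 := Real.sqrt_le_sqrt hsq
        _ = 2 := by
            rw [show (4:ℝ) = 2 ^ 2 by norm_num, Real.sqrt_sq (by norm_num)]
    · norm_num
  set k : Fin n → ℕ := fun i => (Finset.univ.filter (fun j => D i ≤ D j)).card with hk
  have hk1 : ∀ i, 1 ≤ k i := by
    intro i
    have : i ∈ Finset.univ.filter (fun j => D i ≤ D j) := by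
      simp [Finset.mem_filter]
    exact Finset.card_pos.mpr ⟨i, this⟩
  -- Step A: D i ≤ 4 / sqrt (k i)
  have hstepA : ∀ i, D i ≤ 4 / Real.sqrt (k i) := by
    intro i
    rcases eq_or_lt_of_le (hDnonneg i) with h0 | h0
    · rw [← h0]; positivity
    · -- points with large steps are D i separated
      set F : Finset (Fin n) := Finset.univ.filter (fun j => D i ≤ D j) with hF
      set S : Finset (EuclideanSpace ℝ (Fin 2)) := F.image p with hS'
      have hScard : S.card = k i := by
        rw [hS', Finset.card_image_of_injOn (fun a _ b _ h => hpinj h)]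
      have hSsub : ↑S ⊆ unitSquare := by
        intro x hx
        simp only [hS', Finset.coe_image, Set.mem_image] at hx
        obtain ⟨j, _, rfl⟩ := hx
        exact hV (hpV j)
      have hSsep : ∀ x ∈ S, ∀ y ∈ S, x ≠ y → D i ≤ dist x y := by
        intro x hx y hy hne
        simp only [hS', Finset.mem_image] at hx hy
        obtain ⟨a, ha, rfl⟩ := hx
        obtain ⟨b, hb, rfl⟩ := hy
        have hab : a ≠ b := fun h => hne (by rw [h])
        have hDa : D i ≤ D a := (Finset.mem_filter.mp ha).2
        have hDb : D i ≤ D b := (Finset.mem_filter.mp hb).2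
        rcases lt_or_gt_of_ne hab with hlt | hgt
        · exact le_trans hDa (hNUV a b hlt)
        · rw [dist_comm]; exact le_trans hDb (hNUV b a hgt)
      have hcount := aux_card_separated (D i) h0 (hDle i) S hSsub hSsep
      rw [hScard] at hcount
      -- (k i : ℝ) ≤ 16 / (D i)^2, hence D i ≤ 4 / sqrt (k i)
      have hkpos : (0:ℝ) < (k i : ℝ) := by exact_mod_cast hk1 i
      have hDi2 : D i ^ 2 ≤ 16 / (k i : ℝ) := by
        rw [le_div_iff₀ (by positivity)] at hcount
        rw [le_div_iff₀ hkpos]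
        nlinarith
      have hsq : Real.sqrt (D i ^ 2) ≤ Real.sqrt (16 / (k i : ℝ)) :=
        Real.sqrt_le_sqrt hDi2
      rw [Real.sqrt_sq h0.le] at hsq
      rw [Real.sqrt_div (by norm_num) _] at hsq
      rw [show Real.sqrt 16 = 4 by
        rw [show (16:ℝ) = 4 ^ 2 by norm_num, Real.sqrt_sq (by norm_num)]] at hsq
      exact hsq
  -- Step B: at most m indices have k i ≤ m
  have hstepB : ∀ m, (Finset.univ.filter (fun i : Fin n => k i ≤ m)).card ≤ m := by
    intro m
    set T := Finset.univ.filter (fun i : Fin n => k i ≤ m) with hT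
    rcases T.eq_empty_or_nonempty with h | h
    · simp [h]
    · obtain ⟨i0, hi0, hmin⟩ := T.exists_min_image D h
      have hsub : T ⊆ Finset.univ.filter (fun j => D i0 ≤ D j) := by
        intro j hj
        simp only [Finset.mem_filter, Finset.mem_univ, true_and]
        exact hmin j hj
      calc T.card ≤ k i0 := Finset.card_le_card hsub
        _ ≤ m := (Finset.mem_filter.mp hi0).2
  -- Combine
  have hmain : ∑ i : Fin n, D i ≤ ∑ m ∈ Finset.range n, 4 / Real.sqrt (m + 1) := by
    have hg : ∀ a b : ℕ, 1 ≤ a → a ≤ b → 4 / Real.sqrt b ≤ 4 / Real.sqrt a := by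
      intro a b ha hab
      have ha' : (0:ℝ) < (a:ℝ) := by exact_mod_cast Nat.lt_of_lt_of_le Nat.zero_lt_one ha
      have h1 : (0:ℝ) < Real.sqrt a := Real.sqrt_pos.mpr ha' 
      apply div_le_div_of_nonneg_left (by norm_num) h1
      exact Real.sqrt_le_sqrt (by exact_mod_cast hab)
    have h2 := aux_sum_le (fun m => 4 / Real.sqrt m) hg n Finset.univ k hstepB
      (by simp)
    calc ∑ i : Fin n, D i ≤ ∑ i : Fin n, 4 / Real.sqrt (k i) :=
          Finset.sum_le_sum (fun i _ => hstepA i)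
      _ ≤ ∑ m ∈ Finset.range n, 4 / Real.sqrt (m + 1) := by
          have := h2
          convert this using 2 <;> push_cast <;> ring
  have hfinal : ∑ m ∈ Finset.range n, 4 / Real.sqrt (m + 1) ≤ 8 * Real.sqrt n := by
    have := aux_sum_one_div_sqrt n
    have h4 : ∑ m ∈ Finset.range n, 4 / Real.sqrt (m + 1)
        = 4 * ∑ m ∈ Finset.range n, 1 / Real.sqrt (m + 1) := by
      rw [Finset.mul_sum]
      apply Finset.sum_congr rfl
      intro m _
      ring
    rw [h4]
    linarith
  have hwalk : walkLen p = ∑ i : Fin n, D i := rfl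
  rw [hwalk] at *
  have hsqrtnn : (0:ℝ) ≤ Real.sqrt n := Real.sqrt_nonneg _
  calc ∑ i : Fin n, D i ≤ ∑ m ∈ Finset.range n, 4 / Real.sqrt (m + 1) := hmain
    _ ≤ 8 * Real.sqrt n := hfinal
    _ ≤ 12 * Real.sqrt n := by linarith
end
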